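/- Let h₃ be the three-dimensional Heisenberg Lie algebra over ℝ, with basis e₁, e₂, e₃ and bracket ⁅e₁,e₂⁆ = e₃ (all other basis brackets zero). Then there exist a nondegenerate symmetric bilinear form B on h₃ of signature (1,2) (Lorentzian) and a bilinear product · on h₃ such that for all x,y,z ∈ h₃: x·y − y·x = ⁅x,y⁆, B(x·y, z) + B(y, x·z) = 0, and L_⁅x,y⁆ = L_x ∘ L_y − L_y ∘ L_x, where L_x(y) = x·y. (Hence the Heisenberg group H₃ is a flat Lorentzian Lie group; its Levi-Civita connection is geodesically complete since H₃ is unimodular.) -/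

import Mathlib

/-!
In the basis `e₁, e₂, e₃` (`eᵢ₊₁ = b i`) take the form `B` with Gram matrix
`[[0,0,1],[0,1,0],[1,0,0]]` (so the centre `ℝe₃` is null) and the product `x · y = x₁ A y`,
where `A = L_{e₁}` sends `e₁ ↦ -e₂, e₂ ↦ e₃, e₃ ↦ 0`. Torsion-freeness is a check on basis
vectors, and `A` is `B`-skew-adjoint, hence so is every `L_x`. All `L_x` are multiples of `A`,
so they commute, and `L` vanishes on the derived algebra `ℝe₃`: both sides of the flatness
identity are zero. The vectors `e₁ - e₃, e₁ + e₃, e₂` are `B`-orthogonal with `B`-squares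
`-2, 2, 1`, which gives the signature.
-/

/-- A bilinear form `B` on a real vector space `V` has signature `(p,q)` (i.e. `p`
minuses and `q` pluses) if `V` splits as a direct sum of a `p`-dimensional
subspace on which `B` is negative definite and a `q`-dimensional subspace on
which `B` is positive definite, the two being `B`-orthogonal. -/
def HasSignature {V : Type*} [AddCommGroup V] [Module ℝ V]
    (B : V → V → ℝ) (p q : ℕ) : Prop :=
  ∃ N P : Submodule ℝ V,
    Module.finrank ℝ N = p ∧ Module.finrank ℝ P = q ∧
    IsCompl N P ∧
    (∀ x ∈ N, ∀ y ∈ P, B x y = 0) ∧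
    (∀ x ∈ N, x ≠ 0 → B x x < 0) ∧
    (∀ x ∈ P, x ≠ 0 → 0 < B x x)

open Module Submodule LinearMap.BilinForm

theorem LinearMap.BilinForm.apply_sum_smul_of_iIsOrtho {R M ι : Type*} [CommRing R]
    [AddCommGroup M] [Module R M] [Fintype ι] (B : LinearMap.BilinForm R M) {v : ι → M}
    (hv : B.iIsOrtho v) (c : ι → R) :
    B (∑ i, c i • v i) (∑ i, c i • v i) = ∑ i, c i * c i * B (v i) (v i) := by
  simp only [sum_left, sum_right, smul_left, smul_right]
  refine Finset.sum_congr rfl fun i _ => ?_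
  rw [Finset.sum_eq_single i (fun j _ hji => by rw [hv hji, mul_zero]) (by simp)]
  ring

section Signature

variable {V : Type*} [AddCommGroup V] [Module ℝ V] (B : LinearMap.BilinForm ℝ V)

theorem LinearMap.BilinForm.pos_of_mem_span_of_iIsOrtho {ι : Type*} [Fintype ι] {v : ι → V}
    (hv : B.iIsOrtho v) (hpos : ∀ i, 0 < B (v i) (v i)) {x : V}
    (hx : x ∈ span ℝ (Set.range v)) (hx0 : x ≠ 0) : 0 < B x x := by
  obtain ⟨c, rfl⟩ := (mem_span_range_iff_exists_fun ℝ).mp hx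
  obtain ⟨i, hi⟩ : ∃ i, c i ≠ 0 := by
    by_contra! hc
    simp [hc] at hx0
  rw [B.apply_sum_smul_of_iIsOrtho hv]
  exact Finset.sum_pos' (fun j _ => mul_nonneg (mul_self_nonneg _) (hpos j).le)
    ⟨i, Finset.mem_univ _, mul_pos (mul_self_pos.mpr hi) (hpos i)⟩

theorem LinearMap.BilinForm.hasSignature_of_iIsOrtho [FiniteDimensional ℝ V]
    {ι κ : Type*} [Fintype ι] [Fintype κ] {v : ι ⊕ κ → V} (hv : B.iIsOrtho v)
    (hneg : ∀ i, B (v (.inl i)) (v (.inl i)) < 0) (hpos : ∀ k, 0 < B (v (.inr k)) (v (.inr k)))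
    (hcard : Fintype.card ι + Fintype.card κ = finrank ℝ V) :
    HasSignature (fun x y => B x y) (Fintype.card ι) (Fintype.card κ) := by
  have hli : LinearIndependent ℝ v :=
    B.linearIndependent_of_iIsOrtho hv
      (Sum.forall.mpr ⟨fun i => (hneg i).ne, fun k => (hpos k).ne'⟩)
  have hspan : span ℝ (Set.range v) = ⊤ :=
    hli.span_eq_top_of_card_eq_finrank' (by rwa [Fintype.card_sum])
  refine ⟨span ℝ (Set.range (v ∘ Sum.inl)), span ℝ (Set.range (v ∘ Sum.inr)),
    finrank_span_eq_card (hli.comp _ Sum.inl_injective),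
    finrank_span_eq_card (hli.comp _ Sum.inr_injective), ?_, ?_, ?_, ?_⟩
  · rw [Set.range_comp, Set.range_comp]
    exact hli.isCompl_span_image hspan Set.isCompl_range_inl_range_inr
  · intro x hx y hy
    obtain ⟨c, rfl⟩ := (mem_span_range_iff_exists_fun ℝ).mp hx
    obtain ⟨d, rfl⟩ := (mem_span_range_iff_exists_fun ℝ).mp hy
    simp [hv Sum.inl_ne_inr]
  · intro x hx hx0
    have := (-B).pos_of_mem_span_of_iIsOrtho (fun i j hij => by
      simpa using hv (Sum.inl_injective.ne hij)) (fun i => neg_pos.mpr (hneg i)) hx hx0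
    simpa using this
  · exact fun x hx hx0 => B.pos_of_mem_span_of_iIsOrtho (v := v ∘ Sum.inr)
      (fun i j hij => hv (Sum.inr_injective.ne hij)) hpos hx hx0

end Signature

section SmulRight

variable {R L M : Type*} [CommRing R] [AddCommGroup M] [Module R M]

theorem LinearMap.smulRight_lie [LieRing L] [LieAlgebra R L] (f : L →ₗ[R] R)
    (hf : ∀ x y : L, f ⁅x, y⁆ = 0) (A : Module.End R M) (x y : L) :
    f.smulRight A ⁅x, y⁆ =
      f.smulRight A x ∘ₗ f.smulRight A y - f.smulRight A y ∘ₗ f.smulRight A x := by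
  ext z
  simp [hf, smul_smul, mul_comm]

theorem LinearMap.IsSkewAdjoint.smulRight_apply_add [AddCommGroup L] [Module R L]
    {B : LinearMap.BilinForm R M} {A : Module.End R M} (hA : B.IsSkewAdjoint A)
    (f : L →ₗ[R] R) (x : L) (y z : M) :
    B (f.smulRight A x y) z + B y (f.smulRight A x z) = 0 := by
  simp [hA y z]

end SmulRight

section Heisenberg

variable {V : Type*} [AddCommGroup V] [Module ℝ V] (b : Basis (Fin 3) ℝ V)

noncomputable def heisenbergLorentzForm : LinearMap.BilinForm ℝ V :=
  Matrix.toBilin b !![0, 0, 1; 0, 1, 0; 1, 0, 0]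

noncomputable def heisenbergLeftMul : Module.End ℝ V :=
  Matrix.toLin b b !![0, 0, 0; -1, 0, 0; 0, 1, 0]

noncomputable def heisenbergProduct : V →ₗ[ℝ] V →ₗ[ℝ] V :=
  (b.coord 0).smulRight (heisenbergLeftMul b)

@[simp]
theorem heisenbergLorentzForm_basis (i j : Fin 3) :
    heisenbergLorentzForm b (b i) (b j) = !![(0 : ℝ), 0, 1; 0, 1, 0; 1, 0, 0] i j :=
  Matrix.toLinearMap₂_apply_basis ..

theorem heisenbergLorentzForm_comm (x y : V) :
    heisenbergLorentzForm b x y = heisenbergLorentzForm b y x := by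
  have : heisenbergLorentzForm b = (heisenbergLorentzForm b).flip :=
    LinearMap.ext_basis b b fun i j => by fin_cases i <;> fin_cases j <;> simp
  exact LinearMap.congr_fun₂ this x y

theorem heisenbergLorentzForm_nondegenerate : (heisenbergLorentzForm b).Nondegenerate :=
  (Matrix.nondegenerate_toBilin_iff b).mpr <|
    Matrix.nondegenerate_of_det_ne_zero (by simp [Matrix.det_fin_three])

theorem heisenbergLorentzForm_hasSignature :
    HasSignature (fun x y => heisenbergLorentzForm b x y) 1 2 := by
  have hv : (heisenbergLorentzForm b).iIsOrtho (Sum.elim ![b 0 - b 2] ![b 0 + b 2, b 1]) := by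
    simp [iIsOrtho_def, Sum.forall, Fin.forall_fin_one, Fin.forall_fin_two]
  have : FiniteDimensional ℝ V := b.finiteDimensional_of_finite
  exact (heisenbergLorentzForm b).hasSignature_of_iIsOrtho hv (by simp) (by simp)
    (by simp [finrank_eq_card_basis b])

theorem heisenbergLeftMul_isSkewAdjoint :
    (heisenbergLorentzForm b).IsSkewAdjoint (heisenbergLeftMul b) := by
  change LinearMap.IsAdjointPair _ _ (heisenbergLeftMul b) ⇑(-heisenbergLeftMul b)
  refine LinearMap.isAdjointPair_iff_comp_eq_compl₂.mpr (LinearMap.ext_basis b b fun i j => ?_)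
  fin_cases i <;> fin_cases j <;> simp [heisenbergLeftMul, Matrix.toLin_self, Fin.sum_univ_three]

end Heisenberg

section HeisenbergLie

variable {g : Type*} [LieRing g] [LieAlgebra ℝ g] {b : Basis (Fin 3) ℝ g}

theorem heisenberg_lie_basis (h12 : ⁅b 0, b 1⁆ = b 2) (h13 : ⁅b 0, b 2⁆ = (0 : g))
    (h23 : ⁅b 1, b 2⁆ = (0 : g)) (i j : Fin 3) :
    ⁅b i, b j⁆ = !![(0 : ℝ), 1, 0; -1, 0, 0; 0, 0, 0] i j • b 2 := by
  have h21 : ⁅b 1, b 0⁆ = -b 2 := by rw [← lie_skew, h12]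
  have h31 : ⁅b 2, b 0⁆ = (0 : g) := by rw [← lie_skew, h13, neg_zero]
  have h32 : ⁅b 2, b 1⁆ = (0 : g) := by rw [← lie_skew, h23, neg_zero]
  fin_cases i <;> fin_cases j <;> simp [h12, h13, h23, h21, h31, h32]

theorem heisenberg_coord_zero_lie (h12 : ⁅b 0, b 1⁆ = b 2) (h13 : ⁅b 0, b 2⁆ = (0 : g))
    (h23 : ⁅b 1, b 2⁆ = (0 : g)) (x y : g) : b.coord 0 ⁅x, y⁆ = 0 := by
  have : (LieModule.toEnd ℝ g g : g →ₗ[ℝ] Module.End ℝ g).compr₂ (b.coord 0) = 0 :=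
    LinearMap.ext_basis b b fun i j => by simp [heisenberg_lie_basis h12 h13 h23]
  exact LinearMap.congr_fun₂ this x y

theorem heisenbergProduct_sub_flip (h12 : ⁅b 0, b 1⁆ = b 2) (h13 : ⁅b 0, b 2⁆ = (0 : g))
    (h23 : ⁅b 1, b 2⁆ = (0 : g)) (x y : g) :
    heisenbergProduct b x y - heisenbergProduct b y x = ⁅x, y⁆ := by
  have : heisenbergProduct b - (heisenbergProduct b).flip = LieModule.toEnd ℝ g g :=
    LinearMap.ext_basis b b fun i j => by
      fin_cases i <;> fin_cases j <;>
        simp [heisenbergProduct, heisenbergLeftMul, Matrix.toLin_self, Fin.sum_univ_three,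
          heisenberg_lie_basis h12 h13 h23]
  exact LinearMap.congr_fun₂ this x y

end HeisenbergLie

theorem heisenberg_flat_lorentzian
    (g : Type*) [LieRing g] [LieAlgebra ℝ g]
    (b : Module.Basis (Fin 3) ℝ g)
    (h12 : ⁅b 0, b 1⁆ = b 2) (h13 : ⁅b 0, b 2⁆ = (0 : g))
    (h23 : ⁅b 1, b 2⁆ = (0 : g)) :
    ∃ (B : LinearMap.BilinForm ℝ g) (P : g →ₗ[ℝ] g →ₗ[ℝ] g),
      (∀ x y : g, B x y = B y x) ∧
      B.Nondegenerate ∧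
      HasSignature (fun x y : g => B x y) 1 2 ∧
      (∀ x y : g, P x y - P y x = ⁅x, y⁆) ∧
      (∀ x y z : g, B (P x y) z + B y (P x z) = 0) ∧
      (∀ x y : g, P ⁅x, y⁆ = P x ∘ₗ P y - P y ∘ₗ P x) :=
  ⟨heisenbergLorentzForm b, heisenbergProduct b,
    heisenbergLorentzForm_comm b,
    heisenbergLorentzForm_nondegenerate b,
    heisenbergLorentzForm_hasSignature b,
    heisenbergProduct_sub_flip h12 h13 h23,
    (heisenbergLeftMul_isSkewAdjoint b).smulRight_apply_add (b.coord 0),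
    (b.coord 0).smulRight_lie (heisenberg_coord_zero_lie h12 h13 h23) (heisenbergLeftMul b)⟩
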